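/- Let S and T be inverse semigroups and U a partial Morita equivalence from S to T. Then U is a left inverse S-set and a right inverse T-set; that is, the left and right regular pairings automatically satisfy conditions (L-iv) and (R-iv). -/
import Mathlib


/-- An inverse semigroup: a semigroup in which every element has a unique
generalized inverse `star s`. -/
class InverseSemigroup (S : Type*) extends Semigroup S where
  star : S → S
  mul_star_mul : ∀ s : S, s * star s * s = s
  star_mul_star : ∀ s : S, star s * s * star s = star s
  star_unique : ∀ s t : S, s * t * s = s → t * s * t = t → t = star s

postfix:max "⋆" => InverseSemigroup.star

open InverseSemigroup in
lemma is_star_star {S : Type*} [InverseSemigroup S] (s : S) : s⋆⋆ = s :=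
  (star_unique s⋆ s (star_mul_star s) (mul_star_mul s)).symm

open InverseSemigroup in
lemma is_idem_star {S : Type*} [InverseSemigroup S] {e : S} (he : e * e = e) : e⋆ = e := by
  have h : e * e * e = e := by rw [he, he]
  exact (star_unique e e h h).symm

open InverseSemigroup in
lemma is_idem_mul_idem {S : Type*} [InverseSemigroup S] {e f : S} (he : e * e = e)
    (hf : f * f = f) : (e * f) * (e * f) = e * f := by
  set g := (e * f)⋆ with hg
  have he' : ∀ x : S, e * (e * x) = e * x := fun x => by rw [← mul_assoc, he]
  have hf' : ∀ x : S, f * (f * x) = f * x := fun x => by rw [← mul_assoc, hf]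
  have k1 : (e * f) * (f * g * e) * (e * f) = e * f := by
    have := mul_star_mul (e * f)
    simp only [mul_assoc] at this ⊢
    simpa only [he', hf'] using this
  have k2 : (f * g * e) * (e * f) * (f * g * e) = f * g * e := by
    have := star_mul_star (e * f)
    simp only [mul_assoc] at this ⊢
    rw [he', hf']
    rw [show g * (e * (f * (g * e))) = g * (e * (f * g)) * e by simp only [mul_assoc], this]
  have hfge : f * g * e = g := star_unique (e * f) (f * g * e) k1 k2
  have hgg : g * g = g := by
    have := star_mul_star (e * f)
    calc g * g = (f * g * e) * (f * g * e) := by rw [hfge]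
      _ = f * (g * (e * f) * g) * e := by simp only [mul_assoc]
      _ = f * g * e := by rw [this]
      _ = g := hfge
  have : e * f = g := by rw [← is_star_star (e * f), ← hg, is_idem_star hgg]
  rw [this, hgg]

open InverseSemigroup in
lemma is_idem_comm {S : Type*} [InverseSemigroup S] {e f : S} (he : e * e = e)
    (hf : f * f = f) : e * f = f * e := by
  have hef := is_idem_mul_idem he hf
  have hfe := is_idem_mul_idem hf he
  have k1 : (e * f) * (f * e) * (e * f) = e * f := by
    calc (e * f) * (f * e) * (e * f) = e * (f * f) * (e * e) * f := by simp only [mul_assoc]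
      _ = (e * f) * (e * f) := by rw [hf, he]; simp only [mul_assoc]
      _ = e * f := hef
  have k2 : (f * e) * (e * f) * (f * e) = f * e := by
    calc (f * e) * (e * f) * (f * e) = f * (e * e) * (f * f) * e := by simp only [mul_assoc]
      _ = (f * e) * (f * e) := by rw [he, hf]; simp only [mul_assoc]
      _ = f * e := hfe
  calc e * f = (e * f)⋆ := (is_idem_star hef).symm
    _ = f * e := (star_unique (e * f) (f * e) k1 k2).symm

/-- A left regular `S`-set over an inverse semigroup `S`. -/
structure LeftRegularSet (S : Type*) [InverseSemigroup S] (U : Type*) where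
  smul : S → U → U
  pair : U → U → S
  smul_smul : ∀ (s s' : S) (u : U), smul s (smul s' u) = smul (s * s') u
  pair_smul_left : ∀ (s : S) (u u' : U), pair (smul s u) u' = s * pair u u'
  pair_star : ∀ u u' : U, (pair u u')⋆ = pair u' u
  pair_self_smul : ∀ u : U, smul (pair u u) u = u

/-- Condition (L-iv): the left regular `S`-set is a left inverse `S`-set. -/
def LeftRegularSet.IsInverse {S : Type*} [InverseSemigroup S] {U : Type*}
    (M : LeftRegularSet S U) : Prop :=
  ∀ u u' : U, M.smul (M.pair u u') u = u → M.smul (M.pair u' u) u' = u' → u = u'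

/-- A partial Morita equivalence from `S` to `T`. -/
structure PartialMoritaEquiv (S T : Type*) [InverseSemigroup S] [InverseSemigroup T]
    (U : Type*) where
  smul : S → U → U
  act : U → T → U
  smul_smul : ∀ (s s' : S) (u : U), smul s (smul s' u) = smul (s * s') u
  act_act : ∀ (u : U) (t t' : T), act (act u t) t' = act u (t * t')
  compat : ∀ (s : S) (u : U) (t : T), smul s (act u t) = act (smul s u) t
  lpair : U → U → S
  rpair : U → U → T
  lpair_smul : ∀ (s : S) (u u' : U), lpair (smul s u) u' = s * lpair u u'
  lpair_star : ∀ u u' : U, (lpair u u')⋆ = lpair u' u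
  lpair_self : ∀ u : U, smul (lpair u u) u = u
  rpair_act : ∀ (u u' : U) (t : T), rpair u (act u' t) = rpair u u' * t
  rpair_star : ∀ u u' : U, (rpair u u')⋆ = rpair u' u
  rpair_self : ∀ u : U, act u (rpair u u) = u
  mixed : ∀ u u' u'' : U, smul (lpair u u') u'' = act u (rpair u' u'')

theorem stmt8 {S T U : Type*} [InverseSemigroup S] [InverseSemigroup T]
    (M : PartialMoritaEquiv S T U) :
    (∀ u u' : U, M.smul (M.lpair u u') u = u → M.smul (M.lpair u' u) u' = u' → u = u') ∧
    (∀ u u' : U, M.act u (M.rpair u' u) = u → M.act u' (M.rpair u u') = u' → u = u') := by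
  constructor
  · intro u u' h1 h2
    set f := M.lpair u u' with hfdef
    have hff : f * f = f := by
      calc f * f = M.lpair (M.smul f u) u' := (M.lpair_smul f u u').symm
        _ = f := by rw [h1]
    have hf' : M.lpair u' u = f := by rw [← M.lpair_star u u', is_idem_star hff]
    have hu : M.act u' (M.rpair u u) = u := by rw [← M.mixed, hf']; exact h1
    have h2' : M.smul f u' = u' := by rw [← hf']; exact h2
    have hu' : M.act u (M.rpair u' u') = u' := by rw [← M.mixed]; exact h2'
    have he1 : M.rpair u u * M.rpair u u = M.rpair u u := by
      rw [← M.rpair_act, M.rpair_self]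
    have he2 : M.rpair u' u' * M.rpair u' u' = M.rpair u' u' := by
      rw [← M.rpair_act, M.rpair_self]
    calc u = M.act u' (M.rpair u u) := hu.symm
      _ = M.act (M.act u (M.rpair u' u')) (M.rpair u u) := by rw [hu']
      _ = M.act u (M.rpair u' u' * M.rpair u u) := M.act_act _ _ _
      _ = M.act u (M.rpair u u * M.rpair u' u') := by rw [is_idem_comm he2 he1]
      _ = M.act (M.act u (M.rpair u u)) (M.rpair u' u') := (M.act_act _ _ _).symm
      _ = M.act u (M.rpair u' u') := by rw [M.rpair_self]
      _ = u' := hu'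
  · intro u u' h1 h2
    set t := M.rpair u' u with htdef
    have htt : t * t = t := by
      calc t * t = M.rpair u' (M.act u t) := (M.rpair_act u' u t).symm
        _ = t := by rw [h1]
    have ht' : M.rpair u u' = t := by rw [← M.rpair_star u' u, is_idem_star htt]
    have hu : M.smul (M.lpair u u) u' = u := by rw [M.mixed, ht']; exact h1
    have h2' : M.act u' t = u' := by rw [← ht']; exact h2
    have hu' : M.smul (M.lpair u' u') u = u' := by rw [M.mixed]; exact h2'
    have hf1 : M.lpair u u * M.lpair u u = M.lpair u u := by
      rw [← M.lpair_smul, M.lpair_self]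
    have hf2 : M.lpair u' u' * M.lpair u' u' = M.lpair u' u' := by
      rw [← M.lpair_smul, M.lpair_self]
    calc u = M.smul (M.lpair u u) u' := hu.symm
      _ = M.smul (M.lpair u u) (M.smul (M.lpair u' u') u) := by rw [hu']
      _ = M.smul (M.lpair u u * M.lpair u' u') u := M.smul_smul _ _ _
      _ = M.smul (M.lpair u' u' * M.lpair u u) u := by rw [is_idem_comm hf1 hf2]
      _ = M.smul (M.lpair u' u') (M.smul (M.lpair u u) u) := (M.smul_smul _ _ _).symm
      _ = M.smul (M.lpair u' u') u := by rw [M.lpair_self]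
      _ = u' := hu'
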